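/- arXiv:1906.00425 — 9 statements merged into one kernel-verified Lean document; each statement's English description precedes it below -/
import Mathlib

section
/- Let d ≥ 2 be an even integer and let k ≥ 3 be an odd integer. Then ∫_{−1}^{1} max(t, 0) · (d^k/dt^k)[(1 − t^2)^{k + (d−2)/2}] dt = 0. Equivalently, the zonal harmonic coefficient g_k = Vol(S^{d−1}) ∫_{−1}^{1} max(t,0) P_{k,d}(t) (1 − t^2)^{(d−2)/2} dt of the single ReLU unit g(x) = max(x_{d+1}, 0) vanishes for all odd k ≥ 3, where P_{k,d} is the Gegenbauer polynomial. -/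
open Real

open Polynomial in
private lemma iteratedDeriv_polyeval (P : ℝ[X]) (j : ℕ) :
    iteratedDeriv j (fun s : ℝ => P.eval s) = fun t => (derivative^[j] P).eval t := by
  induction j with
  | zero => simp
  | succ j ih =>
    funext t
    rw [iteratedDeriv_succ, ih, Function.iterate_succ_apply']
    exact Polynomial.deriv _

open Polynomial in
private lemma dvd_iter_deriv (n j : ℕ) (hj : j ≤ n) :
    ((1 : ℝ[X]) - X ^ 2) ^ (n - j) ∣ derivative^[j] (((1 : ℝ[X]) - X ^ 2) ^ n) := by
  induction j with
  | zero => simp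
  | succ j ih =>
    have hj' : j ≤ n := Nat.le_of_succ_le hj
    obtain ⟨q, hq⟩ := ih hj'
    rw [Function.iterate_succ_apply', hq, derivative_mul, derivative_pow]
    apply dvd_add
    · exact dvd_mul_of_dvd_left (dvd_mul_of_dvd_left
        (dvd_mul_of_dvd_right (pow_dvd_pow _ (by omega)) _) _) _
    · exact dvd_mul_of_dvd_left (pow_dvd_pow _ (by omega)) _

open Polynomial in
private lemma iter_deriv_boundary (n j : ℕ) (hj : j < n) (t : ℝ) (ht : t ^ 2 = 1) :
    iteratedDeriv j (fun s : ℝ => (1 - s ^ 2) ^ n) t = 0 := by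
  have hfun : (fun s : ℝ => (1 - s ^ 2) ^ n)
      = fun s : ℝ => (((1 : ℝ[X]) - X ^ 2) ^ n).eval s := by
    funext s; simp
  rw [hfun, iteratedDeriv_polyeval]
  obtain ⟨q, hq⟩ := dvd_iter_deriv n j hj.le
  rw [hq]
  have hnj : n - j ≠ 0 := by omega
  simp [ht, zero_pow hnj]

/-- For even `d ≥ 2` and odd `k ≥ 3`, the zonal harmonic coefficient of a single
bias-free ReLU unit vanishes:
`∫_{−1}^{1} max(t,0) · (d^k/dt^k)[(1 − t²)^{k+(d−2)/2}] dt = 0`. -/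
theorem relu_zonal_coeff_odd_vanish (d k : ℕ) (hd : 2 ≤ d) (hde : Even d)
    (hko : Odd k) (hk : 3 ≤ k) :
    (∫ t in (-1:ℝ)..1,
        max t 0 * iteratedDeriv k (fun s : ℝ => (1 - s ^ 2) ^ (k + (d - 2) / 2)) t) = 0 := by
  set n : ℕ := k + (d - 2) / 2 with hn
  have hkn : k ≤ n := Nat.le_add_right _ _
  set f : ℝ → ℝ := fun s => (1 - s ^ 2) ^ n with hf
  set P : Polynomial ℝ := ((1 : Polynomial ℝ) - Polynomial.X ^ 2) ^ n with hP
  have hfun : ∀ j, iteratedDeriv j f = fun t => (Polynomial.derivative^[j] P).eval t := by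
    intro j
    have : f = fun s : ℝ => P.eval s := by funext s; simp [hf, hP]
    rw [this, iteratedDeriv_polyeval]
  have hcont : ∀ j, Continuous (iteratedDeriv j f) := by
    intro j; rw [hfun j]; exact Polynomial.continuous _
  -- oddness of the k-th derivative
  have hodd : ∀ t : ℝ, iteratedDeriv k f (-t) = -iteratedDeriv k f t := by
    intro t
    have heven : (fun x : ℝ => f (-x)) = f := by
      funext x; simp [hf]
    have h := iteratedDeriv_comp_neg k f t
    rw [heven, hko.neg_one_pow] at h
    simp only [smul_eq_mul, neg_one_mul] at h
    linarith
  -- boundary values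
  have hb : ∀ j < n, ∀ t : ℝ, t ^ 2 = 1 → iteratedDeriv j f t = 0 := by
    intro j hj t ht
    exact iter_deriv_boundary n j hj t ht
  have h1 : (1 : ℝ) ^ 2 = 1 := one_pow 2
  have hm1 : (-1 : ℝ) ^ 2 = 1 := by norm_num
  have hmax : ∀ t : ℝ, max t 0 = (t + |t|) / 2 := by
    intro t
    rcases le_total 0 t with h | h
    · rw [max_eq_left h, abs_of_nonneg h]; ring
    · rw [max_eq_right h, abs_of_nonpos h]; ring
  have hint1 : IntervalIntegrable (fun t : ℝ => (1/2) * (t * iteratedDeriv k f t))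
      MeasureTheory.volume (-1) 1 :=
    (Continuous.intervalIntegrable (by fun_prop) _ _)
  have hint2 : IntervalIntegrable (fun t : ℝ => (1/2) * (|t| * iteratedDeriv k f t))
      MeasureTheory.volume (-1) 1 :=
    (Continuous.intervalIntegrable ((continuous_const.mul
      (continuous_abs.mul (hcont k)))) _ _)
  have hsplit : (∫ t in (-1:ℝ)..1, max t 0 * iteratedDeriv k f t)
      = (1/2) * (∫ t in (-1:ℝ)..1, t * iteratedDeriv k f t)
        + (1/2) * (∫ t in (-1:ℝ)..1, |t| * iteratedDeriv k f t) := by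
    have : (∫ t in (-1:ℝ)..1, max t 0 * iteratedDeriv k f t)
        = ∫ t in (-1:ℝ)..1, ((1/2) * (t * iteratedDeriv k f t)
          + (1/2) * (|t| * iteratedDeriv k f t)) := by
      congr 1; funext t; rw [hmax t]; ring
    rw [this, intervalIntegral.integral_add hint1 hint2,
      intervalIntegral.integral_const_mul, intervalIntegral.integral_const_mul]
  -- odd part vanishes by symmetry
  have habs : (∫ t in (-1:ℝ)..1, |t| * iteratedDeriv k f t) = 0 := by
    have hneg : (∫ t in (-1:ℝ)..1, |(-t)| * iteratedDeriv k f (-t))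
        = ∫ t in (-1:ℝ)..1, |t| * iteratedDeriv k f t := by
      have := intervalIntegral.integral_comp_neg (a := (-1:ℝ)) (b := 1)
        (f := fun t => |t| * iteratedDeriv k f t)
      simpa using this
    have : (∫ t in (-1:ℝ)..1, |t| * iteratedDeriv k f t)
        = -∫ t in (-1:ℝ)..1, |t| * iteratedDeriv k f t := by
      conv_lhs => rw [← hneg]
      rw [← intervalIntegral.integral_neg]
      congr 1; funext t
      rw [hodd t, abs_neg]; ring
    linarith
  -- linear part vanishes by integration by parts
  have hparts : (∫ t in (-1:ℝ)..1, t * iteratedDeriv k f t) = 0 := by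
    have hku : k - 1 + 1 = k := by omega
    have hku2 : k - 2 + 1 = k - 1 := by omega
    have hit : Polynomial.derivative^[k] P
        = Polynomial.derivative (Polynomial.derivative^[k-1] P) := by
      have := Function.iterate_succ_apply' Polynomial.derivative (k-1) P
      rw [Nat.succ_eq_add_one, hku] at this; exact this
    have hit2 : Polynomial.derivative^[k-1] P
        = Polynomial.derivative (Polynomial.derivative^[k-2] P) := by
      have := Function.iterate_succ_apply' Polynomial.derivative (k-2) P
      rw [Nat.succ_eq_add_one, hku2] at this; exact this
    have hderivAt : ∀ x ∈ Set.uIcc (-1:ℝ) 1,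
        HasDerivAt (iteratedDeriv (k-1) f) (iteratedDeriv k f x) x := by
      intro x _
      have h2 : iteratedDeriv k f x
          = Polynomial.eval x (Polynomial.derivative (Polynomial.derivative^[k-1] P)) := by
        rw [hfun k, hit]
      rw [hfun (k-1), h2]
      exact Polynomial.hasDerivAt _ x
    have hid : ∀ x ∈ Set.uIcc (-1:ℝ) 1, HasDerivAt (fun t : ℝ => t) 1 x :=
      fun x _ => hasDerivAt_id x
    have hIBP := intervalIntegral.integral_mul_deriv_eq_deriv_mul hid hderivAt
      ((continuous_const.intervalIntegrable _ _))
      ((hcont k).intervalIntegrable _ _)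
    rw [hIBP]
    have hb1 : iteratedDeriv (k-1) f 1 = 0 := hb (k-1) (by omega) 1 h1
    have hb2 : iteratedDeriv (k-1) f (-1) = 0 := hb (k-1) (by omega) (-1) hm1
    have hftc : (∫ x in (-1:ℝ)..1, iteratedDeriv (k-1) f x)
        = iteratedDeriv (k-2) f 1 - iteratedDeriv (k-2) f (-1) := by
      apply intervalIntegral.integral_eq_sub_of_hasDerivAt
      · intro x _
        have h2 : iteratedDeriv (k-1) f x
            = Polynomial.eval x (Polynomial.derivative (Polynomial.derivative^[k-2] P)) := by
          rw [hfun (k-1), hit2]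
        rw [hfun (k-2), h2]
        exact Polynomial.hasDerivAt _ x
      · exact (hcont (k-1)).intervalIntegrable _ _
    have hc1 : iteratedDeriv (k-2) f 1 = 0 := hb (k-2) (by omega) 1 h1
    have hc2 : iteratedDeriv (k-2) f (-1) = 0 := hb (k-2) (by omega) (-1) hm1
    simp only [one_mul]
    rw [hftc, hb1, hb2, hc1, hc2]
    ring
  rw [hsplit, hparts, habs]
  ring
end

section
/- Let d ≥ 2 be an even integer and let k ≥ 3 be an odd integer. Then ∫_{−1}^{1} (1/(2π)) t (π − arccos t) · (d^k/dt^k)[(1 − t^2)^{k + (d−2)/2}] dt = 0. Equivalently, the eigenvalue of convolution on S^d with the kernel K∞(t) = (1/(2π)) t (π − arccos t) corresponding to spherical harmonics of odd frequency k ≥ 3 is zero. -/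
open Real
open Polynomial intervalIntegral


lemma iteratedDeriv_polyeval_s4 (p : Polynomial ℝ) (n : ℕ) :
    iteratedDeriv n (fun x : ℝ => p.eval x) = fun x => (derivative^[n] p).eval x := by
  induction n with
  | zero => simp
  | succ n ih =>
    rw [iteratedDeriv_succ, ih, Function.iterate_succ_apply']
    funext x
    exact Polynomial.deriv ..

lemma poly_integral (R : Polynomial ℝ) (a b : ℝ) :
    (∫ t in a..b, R.derivative.eval t) = R.eval b - R.eval a := by
  apply intervalIntegral.integral_eq_sub_of_hasDerivAt
  · intro x _; exact R.hasDerivAt x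
  · exact (R.derivative.continuous).intervalIntegrable _ _

lemma integral_mul_iterderiv (p : Polynomial ℝ) (k : ℕ) (hk : 3 ≤ k)
    (h1 : (derivative^[k-1] p).eval (1:ℝ) = 0) (h1' : (derivative^[k-1] p).eval (-1:ℝ) = 0)
    (h2 : (derivative^[k-2] p).eval (1:ℝ) = 0) (h2' : (derivative^[k-2] p).eval (-1:ℝ) = 0) :
    (∫ t in (-1:ℝ)..1, t * (derivative^[k] p).eval t) = 0 := by
  set R : Polynomial ℝ := X * derivative^[k-1] p - derivative^[k-2] p with hR
  have hd : R.derivative = X * derivative^[k] p := by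
    rw [hR, derivative_sub, derivative_mul, derivative_X, one_mul]
    have e1 : derivative (derivative^[k-1] p) = derivative^[k] p := by
      conv_rhs => rw [show k = (k-1)+1 by omega]
      rw [Function.iterate_succ_apply']
    have e2 : derivative (derivative^[k-2] p) = derivative^[k-1] p := by
      conv_rhs => rw [show k-1 = (k-2)+1 by omega]
      rw [Function.iterate_succ_apply']
    rw [e1, e2]; ring
  have : (∫ t in (-1:ℝ)..1, t * (derivative^[k] p).eval t)
      = ∫ t in (-1:ℝ)..1, R.derivative.eval t := by
    congr 1; funext t; rw [hd]; simp
  rw [this, poly_integral, hR]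
  simp [h1, h1', h2, h2']

lemma eval_iter_deriv_zero (m j : ℕ) (hj : j < m) (a : ℝ) (ha : a ^ 2 = 1) :
    (derivative^[j] (((1 : Polynomial ℝ) - X ^ 2) ^ m)).eval a = 0 := by
  obtain ⟨q, hq⟩ := pow_sub_dvd_iterate_derivative_pow ((1 : Polynomial ℝ) - X ^ 2) m j
  rw [hq, eval_mul, eval_pow, eval_sub, eval_one, eval_pow, eval_X, ha]
  simp [zero_pow (by omega : m - j ≠ 0)]

/-- For even `d ≥ 2` and odd `k ≥ 3`, the eigenvalue of convolution on `S^d` with the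
bias-free kernel `K∞(t) = (1/(2π)) t (π − arccos t)` at frequency `k` vanishes:
`∫_{−1}^{1} K∞(t) · (d^k/dt^k)[(1 − t²)^{k+(d−2)/2}] dt = 0`. -/
theorem kernel_eigenvalue_odd_vanish (d k : ℕ) (hd : 2 ≤ d) (hde : Even d)
    (hko : Odd k) (hk : 3 ≤ k) :
    (∫ t in (-1:ℝ)..1,
        (1 / (2 * π)) * t * (π - Real.arccos t)
          * iteratedDeriv k (fun s : ℝ => (1 - s ^ 2) ^ (k + (d - 2) / 2)) t) = 0 := by
  set m : ℕ := k + (d - 2) / 2 with hm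
  set P : Polynomial ℝ := ((1 : Polynomial ℝ) - X ^ 2) ^ m with hP
  set f : ℝ → ℝ := fun s : ℝ => (1 - s ^ 2) ^ m with hf
  have hfP : f = fun x => P.eval x := by
    funext x; simp [hf, hP]
  set g : ℝ → ℝ := iteratedDeriv k f with hg
  have hgP : g = fun x => (derivative^[k] P).eval x := by
    rw [hg, hfP, iteratedDeriv_polyeval_s4]
  have hgodd : ∀ x : ℝ, g (-x) = - g x := by
    intro x
    have hfe : (fun x : ℝ => f (-x)) = f := by
      funext y; simp [hf, neg_sq]
    have := iteratedDeriv_comp_neg k f x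
    rw [hfe, hko.neg_one_pow] at this
    rw [hg]
    simp only [smul_eq_mul, neg_one_mul] at this
    linarith [this]
  set F : ℝ → ℝ := fun t => (1 / (2 * π)) * t * (π - Real.arccos t) * g t with hF
  have hgc : Continuous g := by rw [hgP]; exact (derivative^[k] P).continuous
  have hFc : Continuous F := by
    rw [hF]
    exact (((continuous_const.mul continuous_id).mul
      (continuous_const.sub Real.continuous_arccos)).mul hgc)
  have hrefl : (∫ t in (-1:ℝ)..1, F (-t)) = ∫ t in (-1:ℝ)..1, F t := by
    rw [intervalIntegral.integral_comp_neg F]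
    norm_num
  have hsum : ∀ t : ℝ, F t + F (-t) = (1/2) * (t * g t) := by
    intro t
    rw [hF]
    simp only [Real.arccos_neg, hgodd]
    field_simp
    ring
  have hzero : (∫ t in (-1:ℝ)..1, t * g t) = 0 := by
    rw [hgP]
    apply integral_mul_iterderiv P k hk
    · exact eval_iter_deriv_zero m (k-1) (by omega) 1 (by norm_num)
    · exact eval_iter_deriv_zero m (k-1) (by omega) (-1) (by norm_num)
    · exact eval_iter_deriv_zero m (k-2) (by omega) 1 (by norm_num)
    · exact eval_iter_deriv_zero m (k-2) (by omega) (-1) (by norm_num)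
  have h2 : (2:ℝ) * (∫ t in (-1:ℝ)..1, F t) = 0 := by
    have : (2:ℝ) * (∫ t in (-1:ℝ)..1, F t)
        = ∫ t in (-1:ℝ)..1, (F t + F (-t)) := by
      have hi2 : IntervalIntegrable (fun t => F (-t)) MeasureTheory.volume (-1) 1 :=
        (hFc.comp continuous_neg).intervalIntegrable _ _
      rw [intervalIntegral.integral_add (hFc.intervalIntegrable (-1) 1) hi2, hrefl]
      ring
    rw [this]
    calc (∫ t in (-1:ℝ)..1, (F t + F (-t)))
        = ∫ t in (-1:ℝ)..1, (1/2) * (t * g t) := by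
          congr 1; funext t; exact hsum t
      _ = (1/2) * ∫ t in (-1:ℝ)..1, t * g t := by
          rw [intervalIntegral.integral_const_mul]
      _ = 0 := by rw [hzero]; ring
  have := mul_eq_zero.mp h2
  rcases this with h | h
  · norm_num at h
  · exact h
end

section
/- Define K∞ : [−π, π] → ℝ by K∞(θ) = cos θ · (π − |θ|)/(2π), and define its Fourier coefficients a_k = (1/z_k) ∫_{−π}^{π} K∞(θ) cos(kθ) dθ with z_0 = 2π and z_k = π for k ≥ 1. Then: a_0 = 1/π²; a_1 = 1/4; a_k = 2(k² + 1)/(π² (k² − 1)²) for every even integer k ≥ 2; and a_k = 0 for every odd integer k ≥ 3. -/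
open Real


lemma cos_nat_pi (n : ℕ) : Real.cos (n * π) = (-1)^n := by
  simpa using Real.cos_nat_mul_pi_sub 0 n

-- antiderivative lemma
lemma antider (m : ℝ) (hm : m ≠ 0) :
    ∫ θ in (0:ℝ)..π, (π - θ) * Real.cos (m * θ) = (1 - Real.cos (m * π)) / m ^ 2 := by
  have h : ∀ θ ∈ Set.uIcc (0:ℝ) π,
      HasDerivAt (fun θ => (π - θ) * Real.sin (m * θ) / m - Real.cos (m * θ) / m ^ 2)
        ((π - θ) * Real.cos (m * θ)) θ := by
    intro θ _
    have h1 : HasDerivAt (fun θ : ℝ => m * θ) m θ := by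
      simpa using (hasDerivAt_id θ).const_mul m
    have hs : HasDerivAt (fun θ => Real.sin (m * θ)) (Real.cos (m * θ) * m) θ :=
      (Real.hasDerivAt_sin (m * θ)).comp θ h1
    have hc : HasDerivAt (fun θ => Real.cos (m * θ)) (-Real.sin (m * θ) * m) θ :=
      (Real.hasDerivAt_cos (m * θ)).comp θ h1
    have hp : HasDerivAt (fun θ : ℝ => π - θ) (-1) θ := by
      simpa using (hasDerivAt_id θ).const_sub π
    have := ((hp.mul hs).div_const m).sub (hc.div_const (m ^ 2))
    refine this.congr_deriv ?_
    field_simp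
    ring
  rw [intervalIntegral.integral_eq_sub_of_hasDerivAt h (by
    apply Continuous.intervalIntegrable; continuity)]
  simp
  field_simp
  ring

lemma antider0 : ∫ θ in (0:ℝ)..π, (π - θ) = π ^ 2 / 2 := by
  have h : ∀ θ ∈ Set.uIcc (0:ℝ) π,
      HasDerivAt (fun θ : ℝ => π * θ - θ ^ 2 / 2) (π - θ) θ := by
    intro θ _
    have := ((hasDerivAt_id θ).const_mul π).sub ((hasDerivAt_pow 2 θ).div_const 2)
    refine this.congr_deriv ?_
    simp
  rw [intervalIntegral.integral_eq_sub_of_hasDerivAt h (by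
    apply Continuous.intervalIntegrable; continuity)]
  ring

-- master lemma
lemma master (c : ℝ) :
    ∫ θ in (-π)..π, Real.cos θ * (π - |θ|) * Real.cos (c * θ)
      = (∫ θ in (0:ℝ)..π, (π - θ) * Real.cos ((c + 1) * θ))
        + ∫ θ in (0:ℝ)..π, (π - θ) * Real.cos ((c - 1) * θ) := by
  set f : ℝ → ℝ := fun θ => Real.cos θ * (π - |θ|) * Real.cos (c * θ) with hf
  have hi : ∀ a b : ℝ, IntervalIntegrable f MeasureTheory.volume a b := by
    intro a b; apply Continuous.intervalIntegrable; continuity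
  have hsplit := intervalIntegral.integral_add_adjacent_intervals (hi (-π) 0) (hi 0 π)
  have heven : ∫ θ in (-π)..(0:ℝ), f θ = ∫ θ in (0:ℝ)..π, f θ := by
    have h1 : ∫ θ in (-π)..(0:ℝ), f θ = ∫ θ in (-π)..(0:ℝ), f (-θ) := by
      apply intervalIntegral.integral_congr
      intro θ _
      simp [hf, Real.cos_neg, abs_neg, mul_neg]
    rw [h1, intervalIntegral.integral_comp_neg f]
    norm_num
  have key : (2:ℝ) * ∫ θ in (0:ℝ)..π, f θ
      = (∫ θ in (0:ℝ)..π, (π - θ) * Real.cos ((c + 1) * θ))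
        + ∫ θ in (0:ℝ)..π, (π - θ) * Real.cos ((c - 1) * θ) := by
    rw [← intervalIntegral.integral_const_mul,
      ← intervalIntegral.integral_add (by apply Continuous.intervalIntegrable; continuity)
        (by apply Continuous.intervalIntegrable; continuity)]
    apply intervalIntegral.integral_congr
    intro θ hθ
    have hθ' : 0 ≤ θ := by
      rcases Set.mem_uIcc.1 hθ with h | h
      · exact h.1
      · linarith [h.1, Real.pi_pos]
    rw [hf]
    simp only [abs_of_nonneg hθ']
    rw [show (c+1)*θ = c*θ + θ by ring, show (c-1)*θ = c*θ - θ by ring,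
      Real.cos_add, Real.cos_sub]
    ring
  rw [← hsplit, heven]
  linarith [key]

/-- Fourier coefficients of the bias-free kernel `K∞(θ) = cosθ (π − |θ|)/(2π)` on the circle:
`a₀ = 1/π²`, `a₁ = 1/4`, `a_k = 2(k²+1)/(π²(k²−1)²)` for even `k ≥ 2`, and
`a_k = 0` for odd `k ≥ 3`. -/
theorem fourier_coeffs_bias_free_kernel :
    ((1 / (2 * π)) * ∫ θ in (-π)..π, Real.cos θ * (π - |θ|) / (2 * π)) = 1 / π ^ 2 ∧
    ((1 / π) * ∫ θ in (-π)..π, (Real.cos θ * (π - |θ|) / (2 * π)) * Real.cos (1 * θ)) = 1 / 4 ∧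
    (∀ k : ℕ, Even k → 2 ≤ k →
      ((1 / π) * ∫ θ in (-π)..π, (Real.cos θ * (π - |θ|) / (2 * π)) * Real.cos (k * θ))
        = 2 * ((k : ℝ) ^ 2 + 1) / (π ^ 2 * ((k : ℝ) ^ 2 - 1) ^ 2)) ∧
    (∀ k : ℕ, Odd k → 3 ≤ k →
      ((1 / π) * ∫ θ in (-π)..π, (Real.cos θ * (π - |θ|) / (2 * π)) * Real.cos (k * θ)) = 0) := by
  have hπ : (π:ℝ) ≠ 0 := Real.pi_ne_zero
  have hzero : ∫ θ in (0:ℝ)..π, (π - θ) * Real.cos ((0:ℝ) * θ) = π ^ 2 / 2 := by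
    rw [← antider0]
    apply intervalIntegral.integral_congr
    intro θ _; simp
  refine ⟨?_, ?_, ?_, ?_⟩
  · have m0 : ∫ θ in (-π)..π, Real.cos θ * (π - |θ|) = 4 := by
      have h := master 0
      have heq : ∫ θ in (-π)..π, Real.cos θ * (π - |θ|)
          = ∫ θ in (-π)..π, Real.cos θ * (π - |θ|) * Real.cos ((0:ℝ) * θ) := by
        apply intervalIntegral.integral_congr; intro θ _; simp
      rw [heq, h, show (0:ℝ)+1 = 1 by ring, show (0:ℝ)-1 = -1 by ring,
        antider 1 one_ne_zero, antider (-1) (by norm_num)]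
      norm_num [Real.cos_pi]
    rw [intervalIntegral.integral_div, m0]
    field_simp; ring
  · simp only [div_mul_eq_mul_div, intervalIntegral.integral_div]
    rw [master 1, show (1:ℝ)+1 = 2 by norm_num, show (1:ℝ)-1 = 0 by norm_num,
      antider 2 two_ne_zero, hzero]
    norm_num [Real.cos_two_pi]
    field_simp; ring
  · intro k hk hk2
    have hk1' : ((k:ℝ)) ≥ 2 := by exact_mod_cast hk2
    have h1 : (k:ℝ) + 1 ≠ 0 := by linarith
    have h2 : (k:ℝ) - 1 ≠ 0 := by linarith
    simp only [div_mul_eq_mul_div, intervalIntegral.integral_div]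
    rw [master k, antider _ h1, antider _ h2]
    have hc1 : Real.cos (((k:ℝ) + 1) * π) = -1 := by
      have : ((k:ℝ) + 1) = ((k + 1 : ℕ) : ℝ) := by push_cast; ring
      rw [this, cos_nat_pi, Odd.neg_one_pow hk.add_one]
    have hc2 : Real.cos (((k:ℝ) - 1) * π) = -1 := by
      have : ((k:ℝ) - 1) = ((k - 1 : ℕ) : ℝ) := by
        push_cast [Nat.cast_sub (by omega : 1 ≤ k)]; ring
      rw [this, cos_nat_pi, Odd.neg_one_pow (Nat.Even.sub_odd (by omega) hk odd_one)]
    rw [hc1, hc2]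
    have hfac : (k:ℝ) ^ 2 - 1 = ((k:ℝ) - 1) * ((k:ℝ) + 1) := by ring
    rw [hfac]
    field_simp
    ring
  · intro k hk hk3
    have hk1' : ((k:ℝ)) ≥ 3 := by exact_mod_cast hk3
    have h1 : (k:ℝ) + 1 ≠ 0 := by linarith
    have h2 : (k:ℝ) - 1 ≠ 0 := by linarith
    simp only [div_mul_eq_mul_div, intervalIntegral.integral_div]
    rw [master k, antider _ h1, antider _ h2]
    have hc1 : Real.cos (((k:ℝ) + 1) * π) = 1 := by
      have : ((k:ℝ) + 1) = ((k + 1 : ℕ) : ℝ) := by push_cast; ring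
      rw [this, cos_nat_pi, Even.neg_one_pow hk.add_one]
    have hc2 : Real.cos (((k:ℝ) - 1) * π) = 1 := by
      have : ((k:ℝ) - 1) = ((k - 1 : ℕ) : ℝ) := by
        push_cast [Nat.cast_sub (by omega : 1 ≤ k)]; ring
      rw [this, cos_nat_pi, Even.neg_one_pow (Nat.Odd.sub_odd hk odd_one)]
    rw [hc1, hc2]
    simp
end

section
/- Define K̄∞ : [−π, π] → ℝ by K̄∞(θ) = (cos θ + 1)(π − |θ|)/(4π), and define its Fourier coefficients c_k = (1/z_k) ∫_{−π}^{π} K̄∞(θ) cos(kθ) dθ with z_0 = 2π and z_k = π for k ≥ 1. Then: c_0 = 1/(2π²) + 1/8; c_1 = 1/π² + 1/8; c_k = (k² + 1)/(π² (k² − 1)²) for every even integer k ≥ 2; and c_k = 1/(π² k²) for every odd integer k ≥ 3. -/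
open Real intervalIntegral

lemma cosNatPi (k : ℕ) : Real.cos (k * π) = (-1 : ℝ) ^ k := by
  simpa using Real.cos_nat_mul_pi_sub 0 k

lemma J0' : (∫ θ in (0:ℝ)..π, (π - θ) * Real.cos ((0:ℝ) * θ)) = π ^ 2 / 2 := by
  simp only [zero_mul, Real.cos_zero, mul_one]
  rw [intervalIntegral.integral_sub intervalIntegrable_const intervalIntegral.intervalIntegrable_id]
  simp [integral_id]
  ring

lemma J_eval (n : ℝ) (hn : n ≠ 0) :
    (∫ θ in (0:ℝ)..π, (π - θ) * Real.cos (n * θ))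
      = (1 - Real.cos (n * π)) / n ^ 2 := by
  have key : ∀ θ ∈ Set.uIcc (0:ℝ) π,
      HasDerivAt (fun x => (π - x) * Real.sin (n * x) / n - Real.cos (n * x) / n ^ 2)
        ((π - θ) * Real.cos (n * θ)) θ := by
    intro θ _
    have hlin : HasDerivAt (fun x : ℝ => n * x) n θ := by
      simpa using (hasDerivAt_id θ).const_mul n
    have hsin : HasDerivAt (fun x => Real.sin (n * x)) (Real.cos (n * θ) * n) θ :=
      (Real.hasDerivAt_sin (n * θ)).comp θ hlin
    have hcos : HasDerivAt (fun x => Real.cos (n * x)) (-Real.sin (n * θ) * n) θ :=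
      (Real.hasDerivAt_cos (n * θ)).comp θ hlin
    have hpoly : HasDerivAt (fun x : ℝ => π - x) (-1) θ := (hasDerivAt_id θ).const_sub π
    have h := ((hpoly.mul hsin).div_const n).sub (hcos.div_const (n ^ 2))
    refine h.congr_deriv ?_
    field_simp
    ring
  rw [intervalIntegral.integral_eq_sub_of_hasDerivAt key
    ((by fun_prop : Continuous fun θ : ℝ => (π - θ) * Real.cos (n * θ)).intervalIntegrable _ _)]
  field_simp
  simp only [mul_zero, Real.sin_zero, Real.cos_zero]
  ring

lemma core (n : ℝ) :
    (∫ θ in (0:ℝ)..π, (Real.cos θ + 1) * (π - θ) * Real.cos (n * θ))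
      = (∫ θ in (0:ℝ)..π, (π - θ) * Real.cos (n * θ))
        + (1 / 2) * (∫ θ in (0:ℝ)..π, (π - θ) * Real.cos ((n + 1) * θ))
        + (1 / 2) * (∫ θ in (0:ℝ)..π, (π - θ) * Real.cos ((n - 1) * θ)) := by
  have hpt : ∀ θ : ℝ, (Real.cos θ + 1) * (π - θ) * Real.cos (n * θ)
      = (π - θ) * Real.cos (n * θ)
        + (1 / 2) * ((π - θ) * Real.cos ((n + 1) * θ))
        + (1 / 2) * ((π - θ) * Real.cos ((n - 1) * θ)) := by
    intro θ
    have h1 : (n + 1) * θ = n * θ + θ := by ring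
    have h2 : (n - 1) * θ = n * θ - θ := by ring
    rw [h1, h2, Real.cos_add, Real.cos_sub]
    ring
  rw [intervalIntegral.integral_congr (fun θ _ => hpt θ)]
  rw [intervalIntegral.integral_add (by apply Continuous.intervalIntegrable; fun_prop)
      (by apply Continuous.intervalIntegrable; fun_prop),
    intervalIntegral.integral_add (by apply Continuous.intervalIntegrable; fun_prop)
      (by apply Continuous.intervalIntegrable; fun_prop),
    intervalIntegral.integral_const_mul, intervalIntegral.integral_const_mul]

lemma sym (n : ℝ) :
    (∫ θ in (-π)..π, ((Real.cos θ + 1) * (π - |θ|) / (4 * π)) * Real.cos (n * θ))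
      = (1 / (2 * π)) * ∫ θ in (0:ℝ)..π, (Real.cos θ + 1) * (π - θ) * Real.cos (n * θ) := by
  set f : ℝ → ℝ := fun θ => ((Real.cos θ + 1) * (π - |θ|) / (4 * π)) * Real.cos (n * θ) with hf
  have hc : Continuous f := by fun_prop
  have hsplit : (∫ θ in (-π)..π, f θ)
      = (∫ θ in (-π)..(0:ℝ), f θ) + ∫ θ in (0:ℝ)..π, f θ :=
    (intervalIntegral.integral_add_adjacent_intervals (hc.intervalIntegrable _ _)
      (hc.intervalIntegrable _ _)).symm
  have hneg : (∫ θ in (-π)..(0:ℝ), f θ) = ∫ θ in (0:ℝ)..π, f θ := by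
    have h := intervalIntegral.integral_comp_neg (a := (0:ℝ)) (b := π) f
    have heven : ∀ θ : ℝ, f (-θ) = f θ := by
      intro θ; simp [hf, mul_neg, Real.cos_neg, abs_neg]
    simp only [heven, neg_zero] at h
    rw [h]
  have habs : ∀ θ ∈ Set.uIcc (0:ℝ) π,
      f θ = (1 / (4 * π)) * ((Real.cos θ + 1) * (π - θ) * Real.cos (n * θ)) := by
    intro θ hθ
    rw [Set.uIcc_of_le Real.pi_nonneg] at hθ
    rw [hf]
    simp only
    rw [abs_of_nonneg hθ.1]
    ring
  rw [hsplit, hneg, intervalIntegral.integral_congr habs, intervalIntegral.integral_const_mul]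
  have hπ : (π : ℝ) ≠ 0 := Real.pi_ne_zero
  ring

/-- Fourier coefficients of the bias-adjusted kernel `K̄∞(θ) = (cosθ + 1)(π − |θ|)/(4π)`:
`c₀ = 1/(2π²) + 1/8`, `c₁ = 1/π² + 1/8`, `c_k = (k²+1)/(π²(k²−1)²)` for even `k ≥ 2`, and
`c_k = 1/(π²k²)` for odd `k ≥ 3`. -/
theorem fourier_coeffs_bias_adjusted_kernel :
    ((1 / (2 * π)) * ∫ θ in (-π)..π, (Real.cos θ + 1) * (π - |θ|) / (4 * π))
        = 1 / (2 * π ^ 2) + 1 / 8 ∧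
    ((1 / π) * ∫ θ in (-π)..π, ((Real.cos θ + 1) * (π - |θ|) / (4 * π)) * Real.cos (1 * θ))
        = 1 / π ^ 2 + 1 / 8 ∧
    (∀ k : ℕ, Even k → 2 ≤ k →
      ((1 / π) * ∫ θ in (-π)..π, ((Real.cos θ + 1) * (π - |θ|) / (4 * π)) * Real.cos (k * θ))
        = ((k : ℝ) ^ 2 + 1) / (π ^ 2 * ((k : ℝ) ^ 2 - 1) ^ 2)) ∧
    (∀ k : ℕ, Odd k → 3 ≤ k →
      ((1 / π) * ∫ θ in (-π)..π, ((Real.cos θ + 1) * (π - |θ|) / (4 * π)) * Real.cos (k * θ))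
        = 1 / (π ^ 2 * (k : ℝ) ^ 2)) := by
  have hπ : (π : ℝ) ≠ 0 := Real.pi_ne_zero
  refine ⟨?_, ?_, ?_, ?_⟩
  · have h0 : (∫ θ in (-π)..π, (Real.cos θ + 1) * (π - |θ|) / (4 * π))
        = ∫ θ in (-π)..π, ((Real.cos θ + 1) * (π - |θ|) / (4 * π)) * Real.cos ((0:ℝ) * θ) := by
      simp
    rw [h0, sym 0, core 0, J0']
    rw [show (0:ℝ) + 1 = 1 by ring, show (0:ℝ) - 1 = -1 by ring,
      J_eval 1 one_ne_zero, J_eval (-1) (by norm_num)]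
    simp [Real.cos_pi]
    field_simp
    ring
  · rw [sym 1, core 1, J_eval 1 one_ne_zero]
    rw [show (1:ℝ) + 1 = 2 by ring, show (1:ℝ) - 1 = 0 by ring, J0',
      J_eval 2 two_ne_zero]
    rw [show (2:ℝ) * π = π + π by ring]
    simp [Real.cos_pi, Real.cos_add, Real.sin_pi]
    field_simp
    ring
  · intro k hk h2
    have hk0 : (k : ℝ) ≠ 0 := by positivity
    have hk1 : (k : ℝ) - 1 ≠ 0 := by
      have : (2 : ℝ) ≤ (k : ℝ) := by exact_mod_cast h2
      linarith
    have hk1' : (k : ℝ) + 1 ≠ 0 := by positivity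
    have hcosk : Real.cos ((k : ℝ) * π) = 1 := by
      rw [cosNatPi, hk.neg_one_pow]
    have hcosk1 : Real.cos (((k : ℝ) + 1) * π) = -1 := by
      rw [add_mul, one_mul, Real.cos_add, cosNatPi, hk.neg_one_pow]
      simp
    have hcosk2 : Real.cos (((k : ℝ) - 1) * π) = -1 := by
      rw [sub_mul, one_mul, Real.cos_sub, cosNatPi, hk.neg_one_pow]
      simp
    rw [sym k, core k, J_eval _ hk0, J_eval _ hk1', J_eval _ hk1, hcosk, hcosk1, hcosk2]
    have hne : ((k:ℝ)^2 - 1) ≠ 0 := by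
      have : (2 : ℝ) ≤ (k : ℝ) := by exact_mod_cast h2
      nlinarith
    field_simp [hne]
    ring
  · intro k hk h3
    have hk0 : (k : ℝ) ≠ 0 := by positivity
    have hk1 : (k : ℝ) - 1 ≠ 0 := by
      have : (3 : ℝ) ≤ (k : ℝ) := by exact_mod_cast h3
      linarith
    have hk1' : (k : ℝ) + 1 ≠ 0 := by positivity
    have hcosk : Real.cos ((k : ℝ) * π) = -1 := by
      rw [cosNatPi, hk.neg_one_pow]
    have hcosk1 : Real.cos (((k : ℝ) + 1) * π) = 1 := by
      rw [add_mul, one_mul, Real.cos_add, cosNatPi, hk.neg_one_pow]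
      simp
    have hcosk2 : Real.cos (((k : ℝ) - 1) * π) = 1 := by
      rw [sub_mul, one_mul, Real.cos_sub, cosNatPi, hk.neg_one_pow]
      simp
    rw [sym k, core k, J_eval _ hk0, J_eval _ hk1', J_eval _ hk1, hcosk, hcosk1, hcosk2]
    field_simp
    ring
end

section
/- For every natural number n: if n is even then ∫_0^π θ cos θ sin^n θ dθ = −2^{n+2} / ((n+1)(n+2) · binom(n+1, (n+2)/2)), while if n is odd then ∫_0^π θ cos θ sin^n θ dθ = −(π/((n+1) 2^{n+1})) · binom(n+1, (n+1)/2). -/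
open Real

lemma byparts (n : ℕ) :
    (∫ θ in (0:ℝ)..π, θ * Real.cos θ * Real.sin θ ^ n)
      = -(1 / (n + 1 : ℝ)) * ∫ θ in (0:ℝ)..π, Real.sin θ ^ (n + 1) := by
  have hn : ((n : ℝ) + 1) ≠ 0 := by positivity
  have hv : ∀ x : ℝ, HasDerivAt (fun x => Real.sin x ^ (n + 1) / (n + 1))
      (Real.cos x * Real.sin x ^ n) x := by
    intro x
    have := ((Real.hasDerivAt_sin x).pow (n + 1)).div_const ((n : ℝ) + 1)
    refine this.congr_deriv ?_
    push_cast
    field_simp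
  have h := intervalIntegral.integral_mul_deriv_eq_deriv_mul
    (u := fun x : ℝ => x) (u' := fun _ => (1 : ℝ))
    (v := fun x => Real.sin x ^ (n + 1) / (n + 1))
    (v' := fun x => Real.cos x * Real.sin x ^ n)
    (a := 0) (b := π)
    (fun x _ => hasDerivAt_id x) (fun x _ => hv x)
    (by apply Continuous.intervalIntegrable; fun_prop)
    (by apply Continuous.intervalIntegrable; fun_prop)
  have h1 : (∫ θ in (0:ℝ)..π, θ * Real.cos θ * Real.sin θ ^ n)
      = ∫ x in (0:ℝ)..π, x * (Real.cos x * Real.sin x ^ n) := by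
    congr 1; ext x; ring
  rw [h1, h]
  simp [Real.sin_pi, Real.sin_zero, zero_pow (Nat.succ_ne_zero n)]
  rw [inv_mul_eq_div]

lemma sin_pow_even (m : ℕ) :
    (∫ x in (0:ℝ)..π, Real.sin x ^ (2 * m))
      = π * (Nat.factorial (2 * m)) / (4 ^ m * (Nat.factorial m) ^ 2) := by
  induction m with
  | zero => norm_num
  | succ k ih =>
      have h2 : 2 * (k + 1) = 2 * k + 2 := by ring
      rw [h2, integral_sin_pow, ih]
      simp only [Real.sin_zero, Real.sin_pi]
      have hf : (Nat.factorial k : ℝ) ≠ 0 := by positivity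
      have h4 : (4 : ℝ) ^ k ≠ 0 := by positivity
      have hk1 : ((2*k : ℕ) + 2 : ℝ) ≠ 0 := by positivity
      rw [show (2 * k + 2).factorial = (2*k+2) * ((2*k+1) * (2*k).factorial) by
        rw [show 2*k+2 = (2*k+1)+1 by ring, Nat.factorial_succ, Nat.factorial_succ]]
      rw [show (k+1).factorial = (k+1) * k.factorial from Nat.factorial_succ k]
      push_cast
      field_simp
      ring

lemma sin_pow_odd (m : ℕ) :
    (∫ x in (0:ℝ)..π, Real.sin x ^ (2 * m + 1))
      = 2 ^ (2 * m + 1) * (Nat.factorial m) ^ 2 / (Nat.factorial (2 * m + 1)) := by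
  induction m with
  | zero => norm_num
  | succ k ih =>
      have h2 : 2 * (k + 1) + 1 = (2 * k + 1) + 2 := by ring
      rw [h2, integral_sin_pow, ih]
      simp only [Real.sin_zero, Real.sin_pi]
      have hf : (Nat.factorial k : ℝ) ≠ 0 := by positivity
      have hf2 : (Nat.factorial (2*k+1) : ℝ) ≠ 0 := by positivity
      rw [show (2 * k + 1 + 2).factorial = (2*k+3) * ((2*k+2) * (2*k+1).factorial) by
        rw [show 2*k+1+2 = (2*k+2)+1 by ring, Nat.factorial_succ, Nat.factorial_succ]]
      rw [show (k+1).factorial = (k+1) * k.factorial from Nat.factorial_succ k]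
      push_cast
      field_simp
      ring


lemma sin_pow_even' (m : ℕ) :
    (∫ x in (0:ℝ)..π, Real.sin x ^ (2 * m + 2))
      = π * (Nat.factorial (2 * m + 2)) / (4 ^ (m + 1) * (Nat.factorial (m + 1)) ^ 2) := by
  have := sin_pow_even (m + 1)
  rwa [show 2 * (m + 1) = 2 * m + 2 by ring] at this

/-- `∫_0^π θ cosθ sinⁿθ dθ` equals `−2^{n+2}/((n+1)(n+2)·C(n+1,(n+2)/2))` for even `n`, and
`−(π/((n+1)·2^{n+1}))·C(n+1,(n+1)/2)` for odd `n`. -/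
theorem integral_theta_cos_sin_pow (n : ℕ) :
    (Even n → (∫ θ in (0:ℝ)..π, θ * Real.cos θ * Real.sin θ ^ n)
      = -(2 : ℝ) ^ (n + 2) / ((n + 1) * (n + 2) * (Nat.choose (n + 1) ((n + 2) / 2) : ℝ))) ∧
    (Odd n → (∫ θ in (0:ℝ)..π, θ * Real.cos θ * Real.sin θ ^ n)
      = -(π / ((n + 1) * 2 ^ (n + 1))) * (Nat.choose (n + 1) ((n + 1) / 2) : ℝ)) := by
  constructor
  · rintro ⟨m, rfl⟩
    have hn : m + m = 2 * m := by ring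
    rw [hn, byparts, sin_pow_odd]
    have hdiv : (2 * m + 2) / 2 = m + 1 := by omega
    rw [hdiv]
    have hc : (Nat.choose (2*m+1) (m+1) : ℝ) * (m+1).factorial * m.factorial
        = (2*m+1).factorial := by
      have := Nat.choose_mul_factorial_mul_factorial (show m+1 ≤ 2*m+1 by omega)
      have h' : 2*m+1 - (m+1) = m := by omega
      rw [h'] at this
      exact_mod_cast congrArg (Nat.cast : ℕ → ℝ) this
    have hf : (Nat.factorial m : ℝ) ≠ 0 := by positivity
    have hf2 : (Nat.factorial (2*m+1) : ℝ) ≠ 0 := by positivity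
    have hch : (Nat.choose (2*m+1) (m+1) : ℝ) ≠ 0 := by
      have := Nat.choose_pos (show m+1 ≤ 2*m+1 by omega)
      positivity
    rw [show ((m+1).factorial : ℝ) = (m+1) * m.factorial by exact_mod_cast Nat.factorial_succ m] at hc
    push_cast
    push_cast at hc
    field_simp
    linear_combination (-(2:ℝ)^(2*m+2)) * hc
  · rintro ⟨m, rfl⟩
    rw [byparts, sin_pow_even' m]
    have hdiv : (2 * m + 1 + 1) / 2 = m + 1 := by omega
    rw [hdiv]
    have hc : (Nat.choose (2*m+1+1) (m+1) : ℝ) * (m+1).factorial * (m+1).factorial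
        = (2*m+2).factorial := by
      have := Nat.choose_mul_factorial_mul_factorial (show m+1 ≤ 2*m+1+1 by omega)
      have h' : 2*m+1+1 - (m+1) = m+1 := by omega
      rw [h'] at this
      exact_mod_cast congrArg (Nat.cast : ℕ → ℝ) this
    have hf : (Nat.factorial (m+1) : ℝ) ≠ 0 := by positivity
    have hf2 : (Nat.factorial (2*m+2) : ℝ) ≠ 0 := by positivity
    have hch : (Nat.choose (2*m+1+1) (m+1) : ℝ) ≠ 0 := by
      have := Nat.choose_pos (show m+1 ≤ 2*m+1+1 by omega)
      positivity
    have h4 : (4:ℝ)^(m+1) = 2 ^ (2*m+1+1) := by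
      rw [show (4:ℝ) = 2^2 by norm_num, ← pow_mul]; ring_nf
    push_cast
    push_cast at hc
    rw [h4]
    field_simp
    linear_combination hc
end

section
/- For every even integer d ≥ 2, ∫_{−1}^{1} (1/(2π)) t (π − arccos t) · (1 − t²)^{(d−2)/2} dt = binom(d, d/2) / (d · 2^{d+1}). -/
open Real

lemma prod_half (n : ℕ) :
    (∏ i ∈ Finset.range n, (2 * (i : ℝ) + 1) / (2 * i + 2))
      = (Nat.centralBinom n : ℝ) / 4 ^ n := by
  induction n with
  | zero => simp [Nat.centralBinom]
  | succ k ih =>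
    rw [Finset.prod_range_succ, ih]
    have h' : ((k : ℝ) + 1) * (Nat.centralBinom (k + 1) : ℝ)
        = 2 * (2 * k + 1) * (Nat.centralBinom k : ℝ) := by
      exact_mod_cast Nat.succ_mul_centralBinom_succ k
    have hk : ((2:ℝ) * k + 2) ≠ 0 := by positivity
    have h4 : ((4:ℝ)) ^ k ≠ 0 := by positivity
    field_simp
    linear_combination (-2 * (4:ℝ) ^ k) * h'

lemma cos_pow_integral (k : ℕ) :
    (∫ x in (-(π/2))..(π/2), cos x ^ (2 * k))
      = π * (Nat.centralBinom k : ℝ) / 4 ^ k := by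
  have h1 : (∫ x in (-(π/2))..(π/2), cos x ^ (2 * k))
      = ∫ x in (-(π/2))..(π/2), (fun y => sin y ^ (2 * k)) (x + π/2) := by
    refine intervalIntegral.integral_congr fun x _ => ?_
    simp [Real.sin_add_pi_div_two]
  have h2 := intervalIntegral.integral_comp_add_right
    (a := -(π/2)) (b := π/2) (fun y => Real.sin y ^ (2 * k)) (π/2)
  rw [h1, h2, show -(π/2) + π/2 = 0 by ring, show π/2 + π/2 = π by ring,
    integral_sin_pow_even, prod_half]
  ring

/-- For even `d ≥ 2`, the DC (zero-frequency) harmonic coefficient integral of the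
bias-free kernel `K∞(t) = (1/(2π)) t (π − arccos t)` on `S^d`:
`∫_{−1}^{1} K∞(t)(1 − t²)^{(d−2)/2} dt = C(d, d/2)/(d·2^{d+1})`. -/
theorem dc_coeff_bias_free_kernel (d : ℕ) (hd : 2 ≤ d) (hde : Even d) :
    (∫ t in (-1:ℝ)..1,
        (1 / (2 * π)) * t * (π - Real.arccos t) * (1 - t ^ 2) ^ ((d - 2) / 2))
      = (Nat.choose d (d / 2) : ℝ) / (d * 2 ^ (d + 1)) := by
  obtain ⟨m, hm⟩ : ∃ m, d = 2 * m + 2 := by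
    obtain ⟨r, hr⟩ := hde
    exact ⟨r - 1, by omega⟩
  subst hm
  have hexp : (2 * m + 2 - 2) / 2 = m := by omega
  rw [hexp]
  set K : ℝ → ℝ := fun t => (1 / (2 * π)) * t * (π - Real.arccos t) * (1 - t ^ 2) ^ m with hK
  have hKcont : Continuous K :=
    ((continuous_const.mul continuous_id).mul
      (continuous_const.sub Real.continuous_arccos)).mul
      ((continuous_const.sub (continuous_pow 2)).pow m)
  -- substitution t = sin θ
  have hsub : (∫ t in (-1:ℝ)..1, K t)
      = ∫ θ in (-(π/2))..(π/2), cos θ • K (sin θ) := by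
    have h := intervalIntegral.integral_comp_smul_deriv
      (f := fun θ : ℝ => sin θ) (f' := fun θ : ℝ => cos θ) (g := K)
      (a := -(π/2)) (b := π/2)
      (fun x _ => Real.hasDerivAt_sin x) Real.continuous_cos.continuousOn hKcont
    simp only [Function.comp_def, Real.sin_neg, Real.sin_pi_div_two] at h
    exact h.symm
  -- rewrite the integrand on the interval
  have hcongr : (∫ θ in (-(π/2))..(π/2), cos θ • K (sin θ))
      = ∫ θ in (-(π/2))..(π/2),
          (1 / (2 * π)) * (π/2 + θ) * sin θ * cos θ ^ (2*m+1) := by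
    refine intervalIntegral.integral_congr fun θ hθ => ?_
    have hθ' : θ ∈ Set.Icc (-(π/2)) (π/2) := by
      rwa [Set.uIcc_of_le (by linarith [pi_pos])] at hθ
    have harc : Real.arcsin (sin θ) = θ := Real.arcsin_sin hθ'.1 hθ'.2
    have hac : π - Real.arccos (sin θ) = π/2 + θ := by
      rw [Real.arccos_eq_pi_div_two_sub_arcsin, harc]; ring
    have hsq : (1 - sin θ ^ 2 : ℝ) = cos θ ^ 2 := by
      rw [← Real.cos_sq_add_sin_sq θ]; ring
    simp only [hK, smul_eq_mul, hac, hsq, ← pow_mul]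
    ring
  rw [hsub, hcongr]
  -- integration by parts via explicit antiderivative
  set c : ℝ := 1 / (2 * π * (2*(m:ℝ)+2)) with hc
  set F : ℝ → ℝ := fun θ => -((π/2 + θ) * cos θ ^ (2*m+2)) * c with hF
  have hder : ∀ θ : ℝ, HasDerivAt F
      ((1 / (2 * π)) * (π/2 + θ) * sin θ * cos θ ^ (2*m+1) - c * cos θ ^ (2*m+2)) θ := by
    intro θ
    have h1 : HasDerivAt (fun θ : ℝ => (π/2 + θ)) 1 θ :=
      (hasDerivAt_id θ).const_add (π/2)
    have h2 := (Real.hasDerivAt_cos θ).fun_pow (2*m+2)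
    simp only [show 2*m+2-1 = 2*m+1 by omega] at h2
    have h3 := ((h1.mul h2).neg).mul_const c
    refine h3.congr_deriv ?_
    have hπ : (π : ℝ) ≠ 0 := Real.pi_ne_zero
    rw [hc]
    push_cast
    field_simp
    ring
  have hint1 : IntervalIntegrable
      (fun θ => (1 / (2 * π)) * (π/2 + θ) * sin θ * cos θ ^ (2*m+1) - c * cos θ ^ (2*m+2))
      MeasureTheory.volume (-(π/2)) (π/2) := by
    apply Continuous.intervalIntegrable; fun_prop
  have hint2 : IntervalIntegrable (fun θ => c * cos θ ^ (2*m+2))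
      MeasureTheory.volume (-(π/2)) (π/2) := by
    apply Continuous.intervalIntegrable; fun_prop
  have hsplit : (∫ θ in (-(π/2))..(π/2),
        (1 / (2 * π)) * (π/2 + θ) * sin θ * cos θ ^ (2*m+1))
      = (∫ θ in (-(π/2))..(π/2),
          ((1 / (2 * π)) * (π/2 + θ) * sin θ * cos θ ^ (2*m+1) - c * cos θ ^ (2*m+2)))
        + ∫ θ in (-(π/2))..(π/2), c * cos θ ^ (2*m+2) := by
    rw [← intervalIntegral.integral_add hint1 hint2]
    congr 1; funext θ; ring
  have hFTC : (∫ θ in (-(π/2))..(π/2),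
        ((1 / (2 * π)) * (π/2 + θ) * sin θ * cos θ ^ (2*m+1) - c * cos θ ^ (2*m+2)))
      = F (π/2) - F (-(π/2)) :=
    intervalIntegral.integral_eq_sub_of_hasDerivAt (fun θ _ => hder θ) hint1
  have hFzero : F (π/2) - F (-(π/2)) = 0 := by
    simp [hF, Real.cos_pi_div_two, zero_pow]
  have hcosint : (∫ θ in (-(π/2))..(π/2), cos θ ^ (2*m+2))
      = π * (Nat.centralBinom (m+1) : ℝ) / 4 ^ (m+1) := by
    rw [show 2*m+2 = 2*(m+1) by ring, cos_pow_integral]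
  rw [hsplit, hFTC, hFzero, zero_add, intervalIntegral.integral_const_mul, hcosint]
  -- final arithmetic
  have hchoose : ((2*m+2).choose ((2*m+2)/2) : ℕ) = Nat.centralBinom (m+1) := by
    unfold Nat.centralBinom
    rw [show (2*m+2)/2 = m+1 by omega, show 2*m+2 = 2*(m+1) by ring]
  rw [hchoose, hc]
  have hπ : (π : ℝ) ≠ 0 := Real.pi_ne_zero
  have h4 : ((4:ℝ)) ^ (m+1) = 2 ^ (2*m+2) := by
    rw [show (4:ℝ) = 2^2 by norm_num, ← pow_mul, show 2*(m+1) = 2*m+2 by ring]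
  push_cast
  rw [h4]
  field_simp
  ring
end

section
/- Let d ≥ 2 be an even integer, let k ≥ 2 be an even integer, and set p = k + (d−2)/2. Then ∫_{−1}^{1} (1/(2π)) t (π − arccos t) · (d^k/dt^k)[(1 − t²)^p] dt = Σ_{q = ⌈k/2⌉}^{p} C2(q,d,k) · (1/(2(2q − k + 2))) · (1 − (1/2^{2q−k+2}) · binom(2q − k + 2, (2q − k + 2)/2)), where C2(q,d,k) = (−1)^q binom(p, q) (2q)!/(2q − k)!. Consequently the eigenvalue a_k^d of convolution with K∞ on S^d at even frequency k ≥ 2 equals C1(d,k) times this sum. -/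
open Real

section Aux

open Polynomial Finset intervalIntegral MeasureTheory

private lemma prod_id' (n : ℕ) : ∏ i ∈ Finset.range n, ((2 * (i:ℝ) + 1) / (2 * i + 2)) = (Nat.choose (2*n) n : ℝ) / 4 ^ n := by
  induction n with
  | zero => simp
  | succ m ih =>
    rw [Finset.prod_range_succ, ih]
    have hm : ((m:ℝ) + 1) ≠ 0 := by positivity
    have key : ((m:ℝ) + 1) * (Nat.choose (2*(m+1)) (m+1) : ℝ) = 2 * (2*m+1) * (Nat.choose (2*m) m : ℝ) := by
      have := congrArg (Nat.cast (R := ℝ)) (Nat.succ_mul_centralBinom_succ m)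
      push_cast [Nat.centralBinom] at this
      linarith
    have key2 : (Nat.choose (2*(m+1)) (m+1) : ℝ) = 2*(2*m+1) * (Nat.choose (2*m) m : ℝ) / (m+1) := by
      rw [eq_div_iff hm]; linarith
    rw [key2]
    have h4 : (4:ℝ) ^ m ≠ 0 := by positivity
    field_simp
    ring

private lemma cos_pow_int' (n : ℕ) : (∫ x in (0:ℝ)..π, cos x ^ (2*n)) = π * ((Nat.choose (2*n) n : ℝ) / 4 ^ n) := by
  have h1 : (∫ x in (π/2:ℝ)..π, cos x ^ (2*n)) = ∫ x in (0:ℝ)..π/2, cos x ^ (2*n) := by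
    have := intervalIntegral.integral_comp_sub_left (a := (0:ℝ)) (b := π/2) (fun x => cos x ^ (2*n)) π
    rw [show π - (π/2) = π/2 by ring, show π - 0 = π by ring] at this
    rw [← this]
    apply intervalIntegral.integral_congr
    intro x _
    simp [cos_pi_sub, neg_pow, mul_comm]
  have h2 : (∫ x in (0:ℝ)..π, cos x ^ (2*n)) = 2 * ∫ x in (0:ℝ)..π/2, cos x ^ (2*n) := by
    have L : IntervalIntegrable (fun x => cos x ^ (2*n)) MeasureTheory.volume 0 (π/2) :=
      (continuous_cos.pow _).intervalIntegrable _ _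
    have R : IntervalIntegrable (fun x => cos x ^ (2*n)) MeasureTheory.volume (π/2) π :=
      (continuous_cos.pow _).intervalIntegrable _ _
    rw [← intervalIntegral.integral_add_adjacent_intervals L R, h1]; ring
  rw [h2, EulerSine.integral_cos_pow_eq, integral_sin_pow_even, prod_id']
  ring

private lemma subst_arccos (m : ℕ) :
    (∫ t in (-1:ℝ)..1, (1 / (2 * π)) * t * (π - Real.arccos t) * t ^ m)
      = ∫ x in (0:ℝ)..π, sin x * ((1 / (2 * π)) * cos x * (π - x) * cos x ^ m) := by
  have hg : Continuous (fun t : ℝ => (1 / (2 * π)) * t * (π - Real.arccos t) * t ^ m) := by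
    continuity
  have := intervalIntegral.integral_comp_smul_deriv (a := (0:ℝ)) (b := π)
    (f := Real.cos) (f' := fun x => -Real.sin x)
    (g := fun t : ℝ => (1 / (2 * π)) * t * (π - Real.arccos t) * t ^ m)
    (fun x _ => Real.hasDerivAt_cos x) (continuous_sin.neg.continuousOn) hg
  rw [Real.cos_zero, Real.cos_pi] at this
  rw [show (∫ t in (-1:ℝ)..1, (1 / (2 * π)) * t * (π - Real.arccos t) * t ^ m)
      = -∫ t in (1:ℝ)..(-1), (1 / (2 * π)) * t * (π - Real.arccos t) * t ^ m from
    (intervalIntegral.integral_symm _ _), ← this, ← intervalIntegral.integral_neg]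
  apply intervalIntegral.integral_congr
  intro x hx
  rw [Set.uIcc_of_le Real.pi_nonneg] at hx
  simp only [smul_eq_mul, Function.comp]
  rw [Real.arccos_cos hx.1 hx.2]
  ring

private lemma I_eval (r : ℕ) :
    (∫ t in (-1:ℝ)..1, (1 / (2 * π)) * t * (π - Real.arccos t) * t ^ (2*r))
      = (1 / (2 * ((2*r+2 : ℕ) : ℝ))) * (1 - (1:ℝ)/2^(2*r+2) * (Nat.choose (2*r+2) (r+1) : ℝ)) := by
  rw [subst_arccos]
  set m := 2*r with hm
  have hm2 : ((m:ℝ) + 2) ≠ 0 := by positivity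
  set u : ℝ → ℝ := fun x => (1/(2*π)) * (π - x) with hu_def
  set v : ℝ → ℝ := fun x => -(cos x ^ (m+2)) / (m+2) with hv_def
  have hu : ∀ x ∈ Set.uIcc (0:ℝ) π, HasDerivAt u (-(1/(2*π))) x := by
    intro x _
    have h := ((hasDerivAt_id x).const_sub π).const_mul (1/(2*π))
    simp only [hu_def]
    exact h.congr_deriv (by simp)
  have hv : ∀ x ∈ Set.uIcc (0:ℝ) π, HasDerivAt v (sin x * cos x ^ (m+1)) x := by
    intro x _
    have h1 : HasDerivAt (fun x => cos x ^ (m+2)) (((m:ℝ)+2) * cos x ^ (m+1) * (-sin x)) x := by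
      have := (Real.hasDerivAt_cos x).fun_pow (m+2)
      simpa using this
    have := (h1.neg).div_const ((m:ℝ)+2)
    refine this.congr_deriv ?_
    field_simp
  have hIu : IntervalIntegrable (fun _ : ℝ => -(1/(2*π))) volume 0 π :=
    intervalIntegrable_const
  have hIv : IntervalIntegrable (fun x => sin x * cos x ^ (m+1)) volume 0 π :=
    (continuous_sin.mul (continuous_cos.pow _)).intervalIntegrable _ _
  have parts := intervalIntegral.integral_mul_deriv_eq_deriv_mul hu hv hIu hIv
  have congr1 : (∫ x in (0:ℝ)..π, sin x * ((1 / (2 * π)) * cos x * (π - x) * cos x ^ m))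
      = ∫ x in (0:ℝ)..π, u x * (sin x * cos x ^ (m+1)) := by
    apply intervalIntegral.integral_congr
    intro x _
    simp only [hu_def]
    ring
  have hWcos : (∫ x in (0:ℝ)..π, cos x ^ (2*(r+1))) = π * ((Nat.choose (2*(r+1)) (r+1) : ℝ) / 4 ^ (r+1)) :=
    cos_pow_int' (r+1)
  rw [congr1, parts]
  have hvint : (∫ x in (0:ℝ)..π, -(1/(2*π)) * v x)
      = (1/(2*π*((m:ℝ)+2))) * ∫ x in (0:ℝ)..π, cos x ^ (m+2) := by
    rw [← intervalIntegral.integral_const_mul]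
    apply intervalIntegral.integral_congr
    intro x _
    simp only [hv_def]
    field_simp
  rw [hvint, show m + 2 = 2*(r+1) by omega, hWcos]
  simp only [hu_def, hv_def, cos_pi, cos_zero]
  have hπ : (π:ℝ) ≠ 0 := Real.pi_ne_zero
  have hneg : (-1:ℝ)^(m+2) = 1 := by
    rw [hm, show 2*r+2 = 2*(r+1) by ring, pow_mul]; norm_num
  rw [hneg]
  have h2 : (2:ℝ)^(2*(r+1)) ≠ 0 := by positivity
  have h4' : (4:ℝ)^(r+1) ≠ 0 := by positivity
  rw [show (4:ℝ)^(r+1) = 2^(2*(r+1)) by rw [show (4:ℝ) = 2^2 by norm_num, ← pow_mul]]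
  have hcc : ((2*(r+1):ℕ):ℝ) = 2*(r:ℝ)+2 := by push_cast; ring
  rw [hcc, show ((m:ℝ)+2) = 2*(r:ℝ)+2 by push_cast [hm]; ring]
  have hrr : (2*(r:ℝ)+2) ≠ 0 := by positivity
  field_simp
  ring

private lemma iter_deriv_eval' (P : ℝ[X]) (k : ℕ) :
    iteratedDeriv k (fun s : ℝ => P.eval s) = fun s => (Polynomial.derivative^[k] P).eval s := by
  induction k with
  | zero => simp [iteratedDeriv_zero]
  | succ n ih =>
    rw [iteratedDeriv_succ, ih]
    funext s
    rw [Function.iterate_succ_apply']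
    exact Polynomial.deriv _

private lemma iter_deriv_sum' {ι : Type*} (s : Finset ι) (f : ι → ℝ[X]) (k : ℕ) :
    Polynomial.derivative^[k] (∑ i ∈ s, f i) = ∑ i ∈ s, Polynomial.derivative^[k] (f i) := by
  induction k with
  | zero => simp
  | succ n ih => rw [Function.iterate_succ_apply', ih, map_sum]
                 simp [Function.iterate_succ_apply']

private lemma poly_expand' (p : ℕ) :
    ((1 : ℝ[X]) - X^2)^p = ∑ q ∈ Finset.range (p+1), ((-1:ℝ)^q * (Nat.choose p q : ℝ)) • (X^(2*q)) := by
  have h : ((1:ℝ[X]) - X^2)^p = (-X^2 + 1)^p := by ring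
  rw [h, add_pow]
  apply Finset.sum_congr rfl
  intro q hq
  rw [neg_pow, ← pow_mul, one_pow, Polynomial.smul_eq_C_mul]
  rw [Polynomial.C_mul, Polynomial.C_pow, map_neg, Polynomial.C_1, Polynomial.C_eq_natCast]
  ring

private lemma iter_deriv_formula' (p k : ℕ) (t : ℝ) :
    iteratedDeriv k (fun s : ℝ => (1 - s ^ 2) ^ p) t
      = ∑ q ∈ Finset.range (p+1),
          ((-1:ℝ)^q * (Nat.choose p q : ℝ)) * (Nat.descFactorial (2*q) k : ℝ) * t^(2*q - k) := by
  have hfun : (fun s : ℝ => (1 - s ^ 2) ^ p) = fun s => Polynomial.eval s (((1:ℝ[X]) - X^2)^p) := by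
    funext s; simp
  rw [hfun, iter_deriv_eval', poly_expand', iter_deriv_sum']
  simp only [Polynomial.eval_finset_sum]
  apply Finset.sum_congr rfl
  intro q hq
  rw [Polynomial.iterate_derivative_smul, Polynomial.iterate_derivative_X_pow_eq_smul]
  simp [mul_assoc]

end Aux

/-- For even `d ≥ 2` and even `k ≥ 2`, with `p = k + (d−2)/2`:
`∫_{−1}^{1} K∞(t) (d^k/dt^k)[(1−t²)^p] dt
  = Σ_{q=⌈k/2⌉}^{p} C2(q,d,k) (1/(2(2q−k+2))) (1 − 2^{−(2q−k+2)} C(2q−k+2,(2q−k+2)/2))`,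
where `K∞(t) = (1/(2π)) t (π − arccos t)` and `C2(q,d,k) = (−1)^q C(p,q) (2q)!/(2q−k)!`. -/
theorem eigenvalue_bias_free_even (d k : ℕ) (hd : 2 ≤ d) (hde : Even d)
    (hk : 2 ≤ k) (hke : Even k) :
    (∫ t in (-1:ℝ)..1,
        (1 / (2 * π)) * t * (π - Real.arccos t)
          * iteratedDeriv k (fun s : ℝ => (1 - s ^ 2) ^ (k + (d - 2) / 2)) t)
      = ∑ q ∈ Finset.Icc ((k + 1) / 2) (k + (d - 2) / 2),
          ((-1 : ℝ) ^ q * (Nat.choose (k + (d - 2) / 2) q : ℝ)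
              * (((2 * q).factorial : ℝ) / ((2 * q - k).factorial : ℝ)))
            * (1 / (2 * ((2 * q - k + 2 : ℕ) : ℝ)))
            * (1 - (1 : ℝ) / 2 ^ (2 * q - k + 2)
                * (Nat.choose (2 * q - k + 2) ((2 * q - k + 2) / 2) : ℝ)) := by
  set p := k + (d - 2) / 2 with hp
  have hkp : k ≤ p := Nat.le_add_right _ _
  -- rewrite iterated derivative
  have hint : (∫ t in (-1:ℝ)..1,
        (1 / (2 * π)) * t * (π - Real.arccos t)
          * iteratedDeriv k (fun s : ℝ => (1 - s ^ 2) ^ p) t)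
      = ∫ t in (-1:ℝ)..1, ∑ q ∈ Finset.range (p+1),
          ((-1:ℝ)^q * (Nat.choose p q : ℝ) * (Nat.descFactorial (2*q) k : ℝ))
            * ((1 / (2 * π)) * t * (π - Real.arccos t) * t^(2*q - k)) := by
    apply intervalIntegral.integral_congr
    intro t _
    dsimp only
    rw [iter_deriv_formula' p k t, Finset.mul_sum]
    apply Finset.sum_congr rfl
    intro q _
    ring
  rw [hint, intervalIntegral.integral_finset_sum]
  swap
  · intro q _
    apply Continuous.intervalIntegrable
    have harc : Continuous (fun t : ℝ => (1 / (2 * π)) * t * (π - Real.arccos t) * t^(2*q - k)) := by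
      continuity
    exact continuous_const.mul harc
  -- pull out constants
  have hpull : ∀ q ∈ Finset.range (p+1),
      (∫ t in (-1:ℝ)..1,
        ((-1:ℝ)^q * (Nat.choose p q : ℝ) * (Nat.descFactorial (2*q) k : ℝ))
          * ((1 / (2 * π)) * t * (π - Real.arccos t) * t^(2*q - k)))
      = ((-1:ℝ)^q * (Nat.choose p q : ℝ) * (Nat.descFactorial (2*q) k : ℝ))
          * ∫ t in (-1:ℝ)..1, (1 / (2 * π)) * t * (π - Real.arccos t) * t^(2*q - k) := by
    intro q _
    exact intervalIntegral.integral_const_mul _ _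
  rw [Finset.sum_congr rfl hpull]
  -- restrict to Icc
  have hhalf : (k+1)/2 = k/2 := by
    obtain ⟨j, hj⟩ := hke
    omega
  rw [hhalf]
  have hsub : Finset.Icc (k/2) p ⊆ Finset.range (p+1) := by
    intro x hx
    simp only [Finset.mem_Icc] at hx
    simp only [Finset.mem_range]
    omega
  rw [← Finset.sum_subset hsub]
  swap
  · intro x hx hnx
    simp only [Finset.mem_range] at hx
    simp only [Finset.mem_Icc] at hnx
    have hxlt : 2*x < k := by
      obtain ⟨j, hj⟩ := hke
      omega
    rw [Nat.descFactorial_eq_zero_iff_lt.mpr hxlt]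
    simp
  -- termwise equality
  apply Finset.sum_congr rfl
  intro q hq
  simp only [Finset.mem_Icc] at hq
  have hk2q : k ≤ 2*q := by
    obtain ⟨j, hj⟩ := hke
    omega
  set r := q - k/2 with hr
  have hr2 : 2*q - k = 2*r := by
    obtain ⟨j, hj⟩ := hke
    omega
  have hdesc : (Nat.descFactorial (2*q) k : ℝ) = ((2*q).factorial : ℝ) / ((2*r).factorial : ℝ) := by
    have h0 := Nat.factorial_mul_descFactorial hk2q
    rw [hr2] at h0
    have hne : ((2*r).factorial : ℝ) ≠ 0 := by
      exact_mod_cast Nat.factorial_ne_zero _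
    rw [eq_div_iff hne]
    have := congrArg (Nat.cast (R := ℝ)) h0
    push_cast at this
    linarith
  have hdiv : (2*r+2)/2 = r+1 := by omega
  rw [hr2, hdiv, I_eval r, hdesc]
  ring
end

section
/- Let d ≥ 2 be an even integer, let k ≥ 3 be an odd integer, and set p = k + (d−2)/2. Then Σ_{q = ⌈k/2⌉}^{p} (−1)^q · binom(p, q) · ((2q)! / (2q − k)!) · (1/(2q − k + 2)) = 0. (This combinatorial identity expresses that the bias-free eigenvalue formula a_k^d = C1(d,k) Σ_q C2(q,d,k) (1/(2(2q−k+2))) at odd frequencies k ≥ 3 evaluates to zero.) -/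
open Polynomial

/-- `pInt h = ∫₀¹ h(t) dt`, defined formally on polynomial coefficients. -/
noncomputable def pInt (h : ℝ[X]) : ℝ := h.sum fun n a => a / (n + 1)

lemma pInt_zero : pInt (0 : ℝ[X]) = 0 := by simp [pInt]

lemma pInt_add (h g : ℝ[X]) : pInt (h + g) = pInt h + pInt g := by
  unfold pInt
  apply Polynomial.sum_add_index <;> intros <;> [simp; ring]

lemma pInt_monomial (n : ℕ) (a : ℝ) : pInt (monomial n a) = a / (n + 1) := by
  unfold pInt
  rw [Polynomial.sum_monomial_index]
  simp

lemma pInt_sum {ι : Type*} (s : Finset ι) (f : ι → ℝ[X]) :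
    pInt (∑ i ∈ s, f i) = ∑ i ∈ s, pInt (f i) := by
  induction s using Finset.cons_induction <;> simp [pInt_zero, pInt_add, *]

lemma pInt_derivative (h : ℝ[X]) : pInt (derivative h) = h.eval 1 - h.eval 0 := by
  induction h using Polynomial.induction_on' with
  | add p q hp hq => rw [derivative_add, pInt_add, hp, hq]; simp; ring
  | monomial n a =>
    rw [derivative_monomial, pInt_monomial]
    cases n with
    | zero => simp
    | succ m =>
      rw [eval_monomial, eval_monomial]
      have : ((m : ℝ) + 1) ≠ 0 := by positivity
      simp only [Nat.succ_sub_one]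
      push_cast
      field_simp
      simp

lemma pInt_C (a : ℝ) : pInt (C a) = a := by
  rw [← Polynomial.monomial_zero_left, pInt_monomial]
  norm_num

lemma pInt_X_mul_derivative (h : ℝ[X]) : pInt (X * derivative h) = h.eval 1 - pInt h := by
  induction h using Polynomial.induction_on' with
  | add p q hp hq =>
    rw [derivative_add, mul_add, pInt_add, hp, hq, pInt_add]; simp; ring
  | monomial n a =>
    rw [derivative_monomial]
    cases n with
    | zero => simp [pInt_zero, pInt_monomial, pInt_C]
    | succ m =>
      rw [X_mul_monomial, pInt_monomial, pInt_monomial, eval_monomial]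
      simp only [Nat.succ_sub_one]
      have h1 : ((m : ℝ) + 1 + 1) ≠ 0 := by positivity
      push_cast
      field_simp
      ring

lemma dvd_derivative_of_dvd {h : ℝ[X]} {m : ℕ} (hd : (X - 1) ^ (m + 1) ∣ h) :
    (X - 1) ^ m ∣ derivative h := by
  obtain ⟨r, rfl⟩ := hd
  rw [derivative_mul]
  apply dvd_add
  · rw [derivative_pow]
    simp only [Nat.add_sub_cancel, derivative_sub, derivative_X, derivative_one, sub_zero,
      mul_one]
    exact (dvd_mul_left _ _).mul_right _
  · exact ((pow_dvd_pow _ (Nat.le_succ m)).mul_right _)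

lemma iter_dvd (g : ℝ[X]) (p : ℕ) (hg : (X - 1) ^ p ∣ g) :
    ∀ j, j ≤ p → (X - 1) ^ (p - j) ∣ derivative^[j] g := by
  intro j
  induction j with
  | zero => simpa
  | succ i ih =>
    intro hip
    have h1 : (X - 1) ^ (p - i) ∣ derivative^[i] g := ih (by omega)
    have h2 : p - i = (p - (i + 1)) + 1 := by omega
    rw [h2] at h1
    rw [Function.iterate_succ_apply']
    exact dvd_derivative_of_dvd h1

lemma eval_one_iter_deriv (p : ℕ) (j : ℕ) (hj : j < p) :
    (derivative^[j] ((1 - X ^ 2 : ℝ[X]) ^ p)).eval 1 = 0 := by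
  have hdvd : ((X : ℝ[X]) - 1) ^ p ∣ (1 - X ^ 2) ^ p := by
    apply pow_dvd_pow_of_dvd
    exact ⟨-(X + 1), by ring⟩
  have := iter_dvd _ p hdvd j (le_of_lt hj)
  obtain ⟨r, hr⟩ := (dvd_pow_self ((X : ℝ[X]) - 1) (by omega : p - j ≠ 0)).trans this
  rw [hr]
  simp

lemma g_expand (p : ℕ) : ((1 : ℝ[X]) - X ^ 2) ^ p
    = ∑ q ∈ Finset.range (p + 1), C ((-1) ^ q * (p.choose q : ℝ)) * X ^ (2 * q) := by
  rw [sub_eq_add_neg, add_comm, add_pow]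
  apply Finset.sum_congr rfl
  intro q hq
  rw [neg_pow, one_pow, mul_one, map_mul, map_pow, map_neg, map_one, map_natCast]
  ring

/-- For even `d ≥ 2` and odd `k ≥ 3`, with `p = k + (d−2)/2`:
`Σ_{q=⌈k/2⌉}^{p} (−1)^q C(p,q) ((2q)!/(2q−k)!) (1/(2q−k+2)) = 0`. -/
theorem bias_free_odd_eigenvalue_sum_zero (d k : ℕ) (hd : 2 ≤ d) (hde : Even d)
    (hk : 3 ≤ k) (hko : Odd k) :
    ∑ q ∈ Finset.Icc ((k + 1) / 2) (k + (d - 2) / 2),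
        (-1 : ℝ) ^ q * (Nat.choose (k + (d - 2) / 2) q : ℝ)
          * (((2 * q).factorial : ℝ) / ((2 * q - k).factorial : ℝ))
          * (1 / ((2 * q - k + 2 : ℕ) : ℝ)) = 0 := by
  obtain ⟨m, hm⟩ := hko
  set p := k + (d - 2) / 2 with hp
  have hkp : k ≤ p := Nat.le_add_right _ _
  set g : ℝ[X] := (1 - X ^ 2) ^ p with hg
  -- Step 1 & 2 : replace factorial quotient by descFactorial and extend the range
  have step12 : ∑ q ∈ Finset.Icc ((k + 1) / 2) p,
      (-1 : ℝ) ^ q * (p.choose q : ℝ)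
        * (((2 * q).factorial : ℝ) / ((2 * q - k).factorial : ℝ))
        * (1 / ((2 * q - k + 2 : ℕ) : ℝ))
      = ∑ q ∈ Finset.range (p + 1),
      (-1 : ℝ) ^ q * (p.choose q : ℝ) * ((2 * q).descFactorial k : ℝ)
        * (1 / ((2 * q - k + 2 : ℕ) : ℝ)) := by
    rw [Finset.sum_congr rfl (g := fun q => (-1 : ℝ) ^ q * (p.choose q : ℝ)
        * ((2 * q).descFactorial k : ℝ) * (1 / ((2 * q - k + 2 : ℕ) : ℝ)))]
    · apply Finset.sum_subset
      · intro q hq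
        rw [Finset.mem_Icc] at hq
        rw [Finset.mem_range]
        omega
      · intro q hq hnq
        rw [Finset.mem_range] at hq
        rw [Finset.mem_Icc] at hnq
        have h2q : 2 * q < k := by omega
        rw [Nat.descFactorial_eq_zero_iff_lt.mpr h2q]
        simp
    · intro q hq
      rw [Finset.mem_Icc] at hq
      have hk2q : k ≤ 2 * q := by omega
      have hfac := Nat.factorial_mul_descFactorial hk2q
      have : (((2 * q).factorial : ℝ) / ((2 * q - k).factorial : ℝ))
          = ((2 * q).descFactorial k : ℝ) := by
        rw [eq_comm, eq_div_iff (by positivity), ← Nat.cast_mul, mul_comm, hfac]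
      rw [this]
  -- Step 3 : the sum equals pInt (X * derivative^[k] g)
  have step3 : pInt (X * derivative^[k] g)
      = ∑ q ∈ Finset.range (p + 1),
      (-1 : ℝ) ^ q * (p.choose q : ℝ) * ((2 * q).descFactorial k : ℝ)
        * (1 / ((2 * q - k + 2 : ℕ) : ℝ)) := by
    rw [hg, g_expand, iterate_derivative_sum, Finset.mul_sum, pInt_sum]
    apply Finset.sum_congr rfl
    intro q hq
    rw [iterate_derivative_C_mul, iterate_derivative_X_pow_eq_C_mul]
    have h1 : (X : ℝ[X]) * (C ((-1) ^ q * (p.choose q : ℝ))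
          * (C (((2 * q).descFactorial k : ℕ) : ℝ) * X ^ (2 * q - k)))
        = C ((-1) ^ q * (p.choose q : ℝ) * (((2 * q).descFactorial k : ℕ) : ℝ))
          * X ^ (2 * q - k + 1) := by
      simp only [map_mul, map_pow, map_neg, map_one]
      ring
    rw [h1, C_mul_X_pow_eq_monomial, pInt_monomial]
    push_cast
    ring
  -- Step 4 & 5 : integration by parts
  have hk1 : k = (k - 1) + 1 := by omega
  have hk2 : k - 1 = (k - 2) + 1 := by omega
  have step4 : pInt (X * derivative^[k] g)
      = (derivative^[k - 1] g).eval 1 - pInt (derivative^[k - 1] g) := by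
    conv_lhs => rw [hk1, Function.iterate_succ_apply']
    exact pInt_X_mul_derivative _
  have step5 : pInt (derivative^[k - 1] g)
      = (derivative^[k - 2] g).eval 1 - (derivative^[k - 2] g).eval 0 := by
    conv_lhs => rw [hk2, Function.iterate_succ_apply']
    exact pInt_derivative _
  -- Step 6 : boundary values at 1 vanish
  have e1 : (derivative^[k - 1] g).eval 1 = 0 := eval_one_iter_deriv p _ (by omega)
  have e2 : (derivative^[k - 2] g).eval 1 = 0 := eval_one_iter_deriv p _ (by omega)
  -- Step 7 : value at 0 vanishes (odd derivative of an even polynomial)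
  have e0 : (derivative^[k - 2] g).eval 0 = 0 := by
    rw [hg, g_expand, iterate_derivative_sum, eval_finset_sum]
    apply Finset.sum_eq_zero
    intro q hq
    rw [iterate_derivative_C_mul, iterate_derivative_X_pow_eq_C_mul]
    by_cases hcase : 2 * q - (k - 2) = 0
    · have : 2 * q < k - 2 := by omega
      rw [Nat.descFactorial_eq_zero_iff_lt.mpr this]
      simp
    · simp [zero_pow hcase]
  rw [step12, ← step3, step4, step5, e1, e2, e0]
  ring
end

section
/- For every even integer d ≥ 2, ∫_{−1}^{1} (1/(4π)) (t + 1)(π − arccos t) · (1 − t²)^{(d−2)/2} dt = (1/2) · ( binom(d, d/2)/(d · 2^{d+1}) + 2^{d−1}/(d · binom(d−1, d/2)) − (1/2) Σ_{q=0}^{(d−2)/2} (−1)^q binom((d−2)/2, q) / (2q + 1) ). Consequently the zero-frequency (DC) eigenvalue of convolution with the bias-adjusted kernel K̄∞ on S^d equals Vol(S^{d−1}) times the left-hand side. -/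
open Real intervalIntegral Finset

lemma prod_oe (n : ℕ) : ∏ i ∈ Finset.range n, (2*(i:ℝ)+1)/(2*i+2)
    = (Nat.choose (2*n) n : ℝ)/4^n := by
  induction n with
  | zero => simp
  | succ k ih =>
    rw [Finset.prod_range_succ, ih]
    have h := Nat.succ_mul_centralBinom_succ k
    have h' : ((k:ℝ)+1) * (Nat.choose (2*(k+1)) (k+1) : ℝ)
        = 2 * (2*k+1) * (Nat.choose (2*k) k : ℝ) := by
      have := congrArg (Nat.cast (R := ℝ)) h
      push_cast [Nat.centralBinom] at this
      push_cast
      linarith [this]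
    have hk : ((k:ℝ)+1) ≠ 0 := by positivity
    field_simp
    linear_combination (-2*(4:ℝ)^k) * h'

lemma prod_eo (n : ℕ) : ∏ i ∈ Finset.range n, (2*(i:ℝ)+2)/(2*i+3)
    = 4^n * ((n.factorial:ℝ))^2 / ((2*n+1).factorial : ℝ) := by
  induction n with
  | zero => simp
  | succ k ih =>
    rw [Finset.prod_range_succ, ih]
    have e1 : (2*(k+1)+1) = (2*k+1) + 2 := by ring
    have e2 : ((2*(k+1)+1).factorial : ℝ)
        = ((2*k+3) * ((2*k+2) * ((2*k+1).factorial))) := by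
      rw [e1]
      push_cast [Nat.factorial_succ]
      ring
    have e3 : (((k+1).factorial : ℝ)) = (k+1) * (k.factorial) := by
      push_cast [Nat.factorial_succ]; ring
    have h1 : ((2*k+1).factorial : ℝ) ≠ 0 := by positivity
    rw [e2, e3]
    have h2 : (2*(k:ℝ)+3) ≠ 0 := by positivity
    field_simp
    ring

lemma subst_cos (g : ℝ → ℝ) (hg : Continuous g) :
    ∫ t in (-1:ℝ)..1, g t = ∫ θ in (0:ℝ)..π, sin θ * g (cos θ) := by
  have h := integral_comp_smul_deriv (a := π) (b := 0) (f := cos) (f' := fun x => -sin x)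
    (g := g) (fun x _ => Real.hasDerivAt_cos x) (Continuous.continuousOn (by continuity)) hg
  rw [Real.cos_pi, Real.cos_zero] at h
  rw [← h, intervalIntegral.integral_symm]
  rw [← intervalIntegral.integral_neg]
  congr 1 with x
  simp [mul_comm]

lemma int_cos_sin_pow (k : ℕ) :
    ∫ θ in (0:ℝ)..π, cos θ * sin θ ^ (2*k+1) = 0 := by
  have h : ∀ x ∈ Set.uIcc (0:ℝ) π, HasDerivAt (fun θ => sin θ ^ (2*k+2) / (2*k+2))
      (cos x * sin x ^ (2*k+1)) x := by
    intro x _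
    have := ((Real.hasDerivAt_sin x).fun_pow (2*k+2)).div_const (2*k+2)
    refine this.congr_deriv ?_
    have : (2*k+2:ℝ) ≠ 0 := by positivity
    rw [show 2*k+2-1 = 2*k+1 by omega]; push_cast
    field_simp
  rw [intervalIntegral.integral_eq_sub_of_hasDerivAt h
    (Continuous.intervalIntegrable (by continuity) _ _)]
  simp

lemma int_x_cos_sin_pow (k : ℕ) :
    ∫ θ in (0:ℝ)..π, θ * (cos θ * sin θ ^ (2*k+1))
      = -(1/(2*k+2)) * ∫ θ in (0:ℝ)..π, sin θ ^ (2*k+2) := by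
  have hv : ∀ x ∈ Set.uIcc (0:ℝ) π, HasDerivAt (fun θ => sin θ ^ (2*k+2) / (2*k+2))
      (cos x * sin x ^ (2*k+1)) x := by
    intro x _
    have := ((Real.hasDerivAt_sin x).fun_pow (2*k+2)).div_const (2*k+2)
    refine this.congr_deriv ?_
    have : (2*k+2:ℝ) ≠ 0 := by positivity
    rw [show 2*k+2-1 = 2*k+1 by omega]; push_cast
    field_simp
  have hu : ∀ x ∈ Set.uIcc (0:ℝ) π, HasDerivAt (fun θ : ℝ => θ) 1 x :=
    fun x _ => hasDerivAt_id x
  have h := intervalIntegral.integral_mul_deriv_eq_deriv_mul hu hv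
    (Continuous.intervalIntegrable (by continuity) _ _)
    (Continuous.intervalIntegrable (by continuity) _ _)
  rw [h]
  simp [Real.sin_pi]
  ring

lemma int_x_sin_pow (k : ℕ) :
    ∫ θ in (0:ℝ)..π, θ * sin θ ^ (2*k+1)
      = π/2 * ∫ θ in (0:ℝ)..π, sin θ ^ (2*k+1) := by
  have h := intervalIntegral.integral_comp_sub_left (a := (0:ℝ)) (b := π)
    (fun x => x * sin x ^ (2*k+1)) π
  simp only [sub_zero, sub_self] at h
  have h2 : (∫ x in (0:ℝ)..π, (π - x) * sin (π - x) ^ (2*k+1))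
      = ∫ x in (0:ℝ)..π, (π * sin x ^ (2*k+1) - x * sin x ^ (2*k+1)) := by
    congr 1 with x
    rw [Real.sin_pi_sub]
    ring
  rw [h2] at h
  have hsub : (∫ x in (0:ℝ)..π, (π * sin x ^ (2*k+1) - x * sin x ^ (2*k+1)))
      = π * (∫ x in (0:ℝ)..π, sin x ^ (2*k+1)) - ∫ x in (0:ℝ)..π, x * sin x ^ (2*k+1) := by
    rw [intervalIntegral.integral_sub (Continuous.intervalIntegrable (by continuity) _ _)
      (Continuous.intervalIntegrable (by continuity) _ _),
      intervalIntegral.integral_const_mul]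
  rw [hsub] at h
  linarith [h]

lemma sum_eq (m : ℕ) :
    (∫ t in (-1:ℝ)..1, (1 - t^2)^m)
      = 2 * ∑ q ∈ Finset.range (m+1), (-1:ℝ)^q * (Nat.choose m q : ℝ) / (2*q+1) := by
  have hexp : ∀ t:ℝ, (1-t^2)^m
      = ∑ q ∈ Finset.range (m+1), (-1:ℝ)^q * (Nat.choose m q : ℝ) * t^(2*q) := by
    intro t
    rw [sub_eq_add_neg, add_comm, add_pow]
    refine Finset.sum_congr rfl fun q _ => ?_
    rw [neg_pow, one_pow, pow_mul]
    ring
  simp_rw [hexp]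
  rw [intervalIntegral.integral_finset_sum
    (fun q _ => (Continuous.intervalIntegrable (by continuity) _ _))]
  rw [Finset.mul_sum]
  refine Finset.sum_congr rfl fun q _ => ?_
  rw [intervalIntegral.integral_const_mul, integral_pow]
  have h1 : ((-1:ℝ)) ^ (2*q+1) = -1 := by
    rw [pow_succ, pow_mul]; norm_num
  rw [one_pow, h1]
  have h2 : (2*(q:ℝ)+1) ≠ 0 := by positivity
  push_cast
  field_simp
  ring

lemma int_one_sub_sq (m : ℕ) :
    (∫ t in (-1:ℝ)..1, (1 - t^2)^m) = ∫ θ in (0:ℝ)..π, sin θ ^ (2*m+1) := by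
  rw [subst_cos _ (by continuity)]
  congr 1 with θ
  rw [show (1 - cos θ^2) = sin θ^2 from by rw [Real.sin_sq], ← pow_mul]
  ring

/-- For even `d ≥ 2`, the DC (zero-frequency) harmonic coefficient integral of the
bias-adjusted kernel `K̄∞(t) = (1/(4π))(t+1)(π − arccos t)` on `S^d`. -/
theorem dc_coeff_bias_adjusted_kernel (d : ℕ) (hd : 2 ≤ d) (hde : Even d) :
    (∫ t in (-1:ℝ)..1,
        (1 / (4 * π)) * (t + 1) * (π - Real.arccos t) * (1 - t ^ 2) ^ ((d - 2) / 2))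
      = (1 / 2) * ((Nat.choose d (d / 2) : ℝ) / (d * 2 ^ (d + 1))
          + 2 ^ (d - 1) / (d * (Nat.choose (d - 1) (d / 2) : ℝ))
          - (1 / 2) * ∑ q ∈ Finset.range ((d - 2) / 2 + 1),
              (-1 : ℝ) ^ q * (Nat.choose ((d - 2) / 2) q : ℝ) / (2 * q + 1)) := by
  obtain ⟨m, rfl⟩ : ∃ m, d = 2*m+2 := by
    obtain ⟨r, hr⟩ := hde; exact ⟨r-1, by omega⟩
  have h1 : (2*m+2-2)/2 = m := by omega
  have h2 : (2*m+2)/2 = m+1 := by omega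
  have h3 : 2*m+2-1 = 2*m+1 := by omega
  rw [h1, h2, h3]
  have hg : Continuous (fun t : ℝ => (1 / (4 * π)) * (t + 1) * (π - Real.arccos t) * (1 - t ^ 2) ^ m) := by
    have h := Real.continuous_arccos
    continuity
  rw [subst_cos (fun t : ℝ => (1 / (4 * π)) * (t + 1) * (π - Real.arccos t) * (1 - t ^ 2) ^ m) hg]
  have hcong : Set.EqOn
      (fun θ => sin θ * ((1/(4*π)) * (cos θ + 1) * (π - Real.arccos (cos θ)) * (1 - cos θ^2)^m))
      (fun θ => (1/(4*π)) * (π * (cos θ * sin θ^(2*m+1)) + π * sin θ^(2*m+1)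
        - θ * (cos θ * sin θ^(2*m+1)) - θ * sin θ^(2*m+1)))
      (Set.uIcc 0 π) := by
    intro x hx
    rw [Set.uIcc_of_le Real.pi_pos.le] at hx
    simp only
    rw [Real.arccos_cos hx.1 hx.2,
        show (1 - cos x^2) = sin x^2 from by rw [Real.sin_sq], ← pow_mul]
    ring
  rw [intervalIntegral.integral_congr hcong, intervalIntegral.integral_const_mul]
  have c1 : Continuous fun θ:ℝ => cos θ * sin θ^(2*m+1) :=
    Real.continuous_cos.mul (Real.continuous_sin.pow _)
  have c2 : Continuous fun θ:ℝ => sin θ^(2*m+1) := Real.continuous_sin.pow _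
  have c3 : Continuous fun θ:ℝ => θ * (cos θ * sin θ^(2*m+1)) := continuous_id'.mul c1
  have c4 : Continuous fun θ:ℝ => θ * sin θ^(2*m+1) := continuous_id'.mul c2
  have c5 : Continuous fun θ:ℝ => π * (cos θ * sin θ^(2*m+1)) + π * sin θ^(2*m+1) :=
    (continuous_const.mul c1).add (continuous_const.mul c2)
  rw [intervalIntegral.integral_sub (f := fun θ:ℝ => π * (cos θ * sin θ^(2*m+1)) + π * sin θ^(2*m+1) - θ * (cos θ * sin θ^(2*m+1))) ((c5.sub c3).intervalIntegrable _ _)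
      (c4.intervalIntegrable _ _),
    intervalIntegral.integral_sub (c5.intervalIntegrable _ _) (c3.intervalIntegrable _ _),
    intervalIntegral.integral_add (f := fun θ:ℝ => π * (cos θ * sin θ^(2*m+1))) (g := fun θ:ℝ => π * sin θ^(2*m+1)) ((continuous_const.mul c1).intervalIntegrable _ _)
      ((continuous_const.mul c2).intervalIntegrable _ _),
    intervalIntegral.integral_const_mul, intervalIntegral.integral_const_mul,
    int_cos_sin_pow m, int_x_cos_sin_pow m, int_x_sin_pow m]
  have hsum : (∑ q ∈ Finset.range (m+1), (-1:ℝ)^q * (Nat.choose m q : ℝ) / (2*q+1))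
      = (∫ θ in (0:ℝ)..π, sin θ ^ (2*m+1)) / 2 := by
    have := sum_eq m
    rw [int_one_sub_sq m] at this
    linarith
  rw [hsum, integral_sin_pow_odd, show 2*m+2 = 2*(m+1) from by ring, integral_sin_pow_even,
    prod_oe, prod_eo]
  have hC : (Nat.choose (2*m+1) (m+1) : ℝ) * ((m+1).factorial : ℝ) * (m.factorial : ℝ)
      = ((2*m+1).factorial : ℝ) := by
    have h := Nat.choose_mul_factorial_mul_factorial (show m+1 ≤ 2*m+1 by omega)
    have h2 : 2*m+1-(m+1) = m := by omega
    rw [h2] at h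
    exact_mod_cast congrArg (Nat.cast (R := ℝ)) h
  have hch2 : (2*(m+1)) = (2*m+2) := by ring
  rw [hch2]
  have hπ : (π:ℝ) ≠ 0 := Real.pi_ne_zero
  have hf1 : ((2*m+1).factorial : ℝ) ≠ 0 := by positivity
  have hf2 : ((m.factorial : ℝ)) ≠ 0 := by positivity
  have hf3 : (((m+1).factorial : ℝ)) ≠ 0 := by positivity
  have hcne : (Nat.choose (2*m+1) (m+1) : ℝ) ≠ 0 := by
    have := Nat.choose_pos (show m+1 ≤ 2*m+1 by omega)
    positivity
  have hm2 : (2*(m:ℝ)+2) ≠ 0 := by positivity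
  push_cast
  field_simp
  have p1 : (2:ℝ)^(2*m+1) = 2 * 4^m := by rw [pow_add, pow_mul]; norm_num [mul_comm]
  have p2 : (2:ℝ)^(2*m+2+1) = 8 * 4^m := by
    rw [show 2*m+2+1 = 2*m+3 from rfl, pow_add, pow_mul]; norm_num; ring
  have hC2n : (2*m+2).choose (m+1) = 2 * ((2*m+1).choose (m+1)) := by
    have hsymm : (2*m+1).choose m = (2*m+1).choose (m+1) := by
      have := Nat.choose_symm (show m+1 ≤ 2*m+1 by omega)
      rw [show 2*m+1-(m+1) = m from by omega] at this
      omega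
    rw [show 2*m+2 = (2*m+1)+1 from rfl, Nat.choose_succ_succ]
    simp only [Nat.succ_eq_add_one]
    omega
  have hC2 : ((2*m+2).choose (m+1) : ℝ) = 2 * (((2*m+1).choose (m+1) : ℕ) : ℝ) := by
    exact_mod_cast congrArg (Nat.cast (R := ℝ)) hC2n
  have hFsub : (((2*m+1).factorial : ℕ) : ℝ)
      = (((2*m+1).choose (m+1) : ℕ) : ℝ) * (((m:ℝ)+1) * ((m.factorial : ℕ) : ℝ))
        * ((m.factorial : ℕ) : ℝ) := by
    rw [← hC]
    push_cast [Nat.factorial_succ]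
    ring
  rw [p1, p2, hC2, hFsub, pow_succ]
  ring
end
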